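/- Any central extension of F_n^1 (resp. F_n^2) by an abelian algebra V of dimension k ≥ 5, with V equal to the center of the extension, is a split algebra, i.e., isomorphic to a direct sum of a smaller algebra and a nontrivial abelian ideal complement. -/
import Mathlib


/-- Multiplication of `F_n^1`. -/
def F1mul (n : ℕ) (x y : Fin n → ℂ) : Fin n → ℂ :=
  fun k =>
    if h : (k : ℕ) = 2 then
      (x ⟨0, by have := k.isLt; omega⟩ + x ⟨1, by have := k.isLt; omega⟩) *
        y ⟨0, by have := k.isLt; omega⟩
    else if h2 : 3 ≤ (k : ℕ) then
      x ⟨(k : ℕ) - 1, by have := k.isLt; omega⟩ * y ⟨0, by have := k.isLt; omega⟩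
    else 0

/-- Multiplication of `F_n^2`. -/
def F2mul (n : ℕ) (x y : Fin n → ℂ) : Fin n → ℂ :=
  fun k =>
    if h : (k : ℕ) = 2 then
      x ⟨0, by have := k.isLt; omega⟩ * y ⟨0, by have := k.isLt; omega⟩
    else if h2 : 3 ≤ (k : ℕ) then
      x ⟨(k : ℕ) - 1, by have := k.isLt; omega⟩ * y ⟨0, by have := k.isLt; omega⟩
    else 0

/-- The central extension `L_θ = L ⊕ V` of an algebra `(Fin n → ℂ, μ)`. -/
def extMul (n k : ℕ) (μ : (Fin n → ℂ) → (Fin n → ℂ) → (Fin n → ℂ))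
    (θ : (Fin n → ℂ) → (Fin n → ℂ) → (Fin k → ℂ))
    (a b : (Fin n → ℂ) × (Fin k → ℂ)) : (Fin n → ℂ) × (Fin k → ℂ) :=
  (μ a.1 b.1, θ a.1 b.1)

/-- An algebra `(Fin n → ℂ) × (Fin k → ℂ)` with bracket `mul` is split if it
is isomorphic to the direct sum of a smaller algebra and a nontrivial
abelian ideal complement. -/
def IsSplit (n k : ℕ)
    (mul : (Fin n → ℂ) × (Fin k → ℂ) → (Fin n → ℂ) × (Fin k → ℂ) →
      (Fin n → ℂ) × (Fin k → ℂ)) : Prop :=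
  ∃ m j : ℕ, 0 < j ∧ m + j = n + k ∧
    ∃ μ' : (Fin m → ℂ) → (Fin m → ℂ) → (Fin m → ℂ),
      ∃ f : ((Fin n → ℂ) × (Fin k → ℂ)) ≃ₗ[ℂ] ((Fin m → ℂ) × (Fin j → ℂ)),
        ∀ a b, f (mul a b) = (μ' (f a).1 (f b).1, 0)


set_option maxHeartbeats 1000000
set_option maxRecDepth 4000
set_option linter.unusedVariables false
set_option linter.unreachableTactic false
set_option linter.unusedTactic false
set_option linter.unnecessarySeqFocus false

lemma split_of_functional (n k : ℕ) (hnk : 1 ≤ n + k)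
    (μ : (Fin n → ℂ) → (Fin n → ℂ) → (Fin n → ℂ))
    (θf : (Fin n → ℂ) → (Fin n → ℂ) → (Fin k → ℂ))
    (q : ((Fin n → ℂ) × (Fin k → ℂ)) →ₗ[ℂ] ℂ)
    (u : (Fin n → ℂ) × (Fin k → ℂ)) (hu1 : u.1 = 0) (hqu : q u = 1)
    (hq0 : ∀ a b, q (extMul n k μ θf a b) = 0) :
    IsSplit n k (extMul n k μ θf) := by
  classical
  -- q is surjective
  have hsurj : LinearMap.range q = ⊤ := by
    rw [LinearMap.range_eq_top]
    intro t
    exact ⟨t • u, by simp [map_smul, hqu]⟩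
  have hfinU : Module.finrank ℂ ((Fin n → ℂ) × (Fin k → ℂ)) = n + k := by
    simp [Module.finrank_prod, Module.finrank_pi]
  have hker : Module.finrank ℂ (LinearMap.ker q) = n + k - 1 := by
    have h1 := q.finrank_range_add_finrank_ker
    rw [hsurj] at h1
    rw [finrank_top] at h1
    rw [hfinU] at h1
    have : Module.finrank ℂ ℂ = 1 := Module.finrank_self ℂ
    omega
  set m := n + k - 1 with hm
  have e : (LinearMap.ker q) ≃ₗ[ℂ] (Fin m → ℂ) := by
    apply LinearEquiv.ofFinrankEq
    rw [hker, Module.finrank_pi]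
    simp
  -- the projection onto ker q
  have hmem : ∀ z : ((Fin n → ℂ) × (Fin k → ℂ)), z - q z • u ∈ LinearMap.ker q := by
    intro z
    simp [LinearMap.mem_ker, map_sub, map_smul, hqu]
  set Pmap : ((Fin n → ℂ) × (Fin k → ℂ)) →ₗ[ℂ] (LinearMap.ker q) :=
    (LinearMap.id - q.smulRight u).codRestrict (LinearMap.ker q)
      (fun z => by simpa using hmem z) with hPmap
  have hPapply : ∀ z : ((Fin n → ℂ) × (Fin k → ℂ)), (Pmap z : ((Fin n → ℂ) × (Fin k → ℂ))) = z - q z • u := fun z => rfl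
  set Fmap : ((Fin n → ℂ) × (Fin k → ℂ)) →ₗ[ℂ] (Fin m → ℂ) × (Fin 1 → ℂ) :=
    LinearMap.prod (e.toLinearMap ∘ₗ Pmap) (LinearMap.pi fun _ => q) with hFmap
  set Gmap : (Fin m → ℂ) × (Fin 1 → ℂ) →ₗ[ℂ] ((Fin n → ℂ) × (Fin k → ℂ)) :=
    ((LinearMap.ker q).subtype ∘ₗ e.symm.toLinearMap ∘ₗ LinearMap.fst ℂ _ _) +
      ((LinearMap.proj (0 : Fin 1)) ∘ₗ LinearMap.snd ℂ _ _).smulRight u with hGmap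
  have hGapply : ∀ p t, Gmap (p, t) = (e.symm p : ((Fin n → ℂ) × (Fin k → ℂ))) + t 0 • u := fun p t => rfl
  have hqsym : ∀ p : Fin m → ℂ, q (e.symm p : ((Fin n → ℂ) × (Fin k → ℂ))) = 0 := by
    intro p
    exact (e.symm p).2
  have h1 : Fmap.comp Gmap = LinearMap.id := by
    apply LinearMap.ext
    rintro ⟨p, t⟩
    have hz : q ((e.symm p : ((Fin n → ℂ) × (Fin k → ℂ))) + t 0 • u) = t 0 := by
      simp [map_add, map_smul, hqsym, hqu]
    apply Prod.ext
    · show e (Pmap (Gmap (p, t))) = p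
      rw [hGapply]
      have : Pmap ((e.symm p : ((Fin n → ℂ) × (Fin k → ℂ))) + t 0 • u) = e.symm p := by
        apply Subtype.ext
        rw [hPapply, hz]
        abel
      rw [this]
      simp
    · show (fun _ : Fin 1 => q (Gmap (p, t))) = t
      funext i
      rw [hGapply, hz]
      congr 1
      exact Subsingleton.elim 0 i
  have h2 : Gmap.comp Fmap = LinearMap.id := by
    apply LinearMap.ext
    intro z
    show Gmap (e (Pmap z), fun _ => q z) = z
    rw [hGapply]
    simp only [LinearEquiv.symm_apply_apply]
    rw [hPapply]
    abel
  set f : ((Fin n → ℂ) × (Fin k → ℂ)) ≃ₗ[ℂ] (Fin m → ℂ) × (Fin 1 → ℂ) := LinearEquiv.ofLinear Fmap Gmap h1 h2 with hf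
  have hfapply : ∀ z : ((Fin n → ℂ) × (Fin k → ℂ)), f z = (e (Pmap z), fun _ => q z) := fun z => rfl
  have hfsymm : ∀ p t, f.symm (p, t) = (e.symm p : ((Fin n → ℂ) × (Fin k → ℂ))) + t 0 • u := fun p t => rfl
  -- the key invariance: (f.symm ((f a).1, 0)).1 = a.1
  have hfirst : ∀ a : ((Fin n → ℂ) × (Fin k → ℂ)), (f.symm ((f a).1, 0)).1 = a.1 := by
    intro a
    rw [hfapply, hfsymm]
    simp only [Pi.zero_apply, zero_smul, add_zero]
    have : (e.symm (e (Pmap a)) : ((Fin n → ℂ) × (Fin k → ℂ))) = (Pmap a : ((Fin n → ℂ) × (Fin k → ℂ))) := by simp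
    rw [this, hPapply]
    simp [hu1]
  refine ⟨m, 1, one_pos, by rw [hm]; omega, ?_, f, ?_⟩
  · exact fun p r => (f (extMul n k μ θf (f.symm (p, 0)) (f.symm (r, 0)))).1
  · intro a b
    have hexteq : extMul n k μ θf (f.symm ((f a).1, 0)) (f.symm ((f b).1, 0))
        = extMul n k μ θf a b := by
      unfold extMul
      rw [hfirst a, hfirst b]
    apply Prod.ext
    · show (f (extMul n k μ θf a b)).1
          = (f (extMul n k μ θf (f.symm ((f a).1, 0)) (f.symm ((f b).1, 0)))).1
      rw [hexteq]
    · show (fun _ : Fin 1 => q (extMul n k μ θf a b)) = 0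
      funext i
      rw [hq0]
      rfl

theorem master_split (n k : ℕ) (hn : 4 ≤ n) (hk : 5 ≤ k)
    (μ : (Fin n → ℂ) → (Fin n → ℂ) → (Fin n → ℂ))
    (B : (Fin n → ℂ) →ₗ[ℂ] (Fin n → ℂ) →ₗ[ℂ] (Fin n → ℂ))
    (hB : ∀ x y, B x y = μ x y)
    (θ : (Fin n → ℂ) →ₗ[ℂ] (Fin n → ℂ) →ₗ[ℂ] (Fin k → ℂ))
    (hcoc : ∀ x y z, θ x (μ y z) = θ (μ x y) z - θ (μ x z) y)
    (c : ℂ)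
    (H1 : ∀ a b : Fin n, (b : ℕ) ≠ 0 → B (Pi.single a 1) (Pi.single b 1) = 0)
    (H2 : B (Pi.single ⟨0, by omega⟩ 1) (Pi.single ⟨0, by omega⟩ 1)
          = Pi.single ⟨2, by omega⟩ 1)
    (H3 : ∀ a : ℕ, ∀ _ha : 2 ≤ a, ∀ _hb : a ≤ n - 2,
      B (Pi.single (⟨a, by omega⟩ : Fin n) 1) (Pi.single ⟨0, by omega⟩ 1)
        = Pi.single (⟨a + 1, by omega⟩ : Fin n) 1)
    (H4 : B (Pi.single ⟨n - 1, by omega⟩ 1) (Pi.single ⟨0, by omega⟩ 1) = 0)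
    (H5 : B (Pi.single ⟨1, by omega⟩ 1) (Pi.single ⟨0, by omega⟩ 1)
          = c • (Pi.single ⟨2, by omega⟩ 1 : Fin n → ℂ)) :
    IsSplit n k (extMul n k μ fun x y => θ x y) := by
  classical
  have h0n : 0 < n := by omega
  have h1n : 1 < n := by omega
  have h2n : 2 < n := by omega
  set i0 : Fin n := ⟨0, h0n⟩ with hi0
  set i1 : Fin n := ⟨1, h1n⟩ with hi1
  set i2 : Fin n := ⟨2, h2n⟩ with hi2
  set itop : Fin n := ⟨n - 1, by omega⟩ with hitop
  have hcocB : ∀ x y z, θ x (B y z) = θ (B x y) z - θ (B x z) y := by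
    intro x y z; rw [hB, hB, hB]; exact hcoc x y z
  -- F-type lemma
  have Flem : ∀ s b : Fin n, (b : ℕ) ≠ 0 →
      θ (B (Pi.single s 1) (Pi.single i0 1)) (Pi.single b 1) = 0 := by
    intro s b hb
    have h := hcocB (Pi.single s 1) (Pi.single i0 1) (Pi.single b 1)
    rw [H1 i0 b hb, H1 s b hb] at h
    simpa using h.symm
  -- column 2 is zero
  have Elem0 : ∀ a : Fin n, θ (Pi.single a 1) (Pi.single i2 1) = 0 := by
    intro a
    have h := hcocB (Pi.single a 1) (Pi.single i0 1) (Pi.single i0 1)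
    rw [H2] at h
    simpa using h
  have ElemB : ∀ a b : Fin n, (b : ℕ) ≠ 0 →
      θ (Pi.single a 1) (B (Pi.single b 1) (Pi.single i0 1)) = 0 := by
    intro a b hb
    have h := hcocB (Pi.single a 1) (Pi.single b 1) (Pi.single i0 1)
    rw [H1 a b hb, Flem a b hb] at h
    simpa using h
  -- rows ≥ 2 are represented as brackets
  have rep : ∀ r : Fin n, 2 ≤ (r : ℕ) →
      ∃ s : Fin n, B (Pi.single s 1) (Pi.single i0 1) = Pi.single r 1 := by
    intro r hr
    rcases eq_or_lt_of_le hr with h2 | h3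
    · refine ⟨i0, ?_⟩
      have : r = i2 := Fin.ext (by simpa using h2.symm)
      rw [this, H2]
    · have hrn := r.isLt
      refine ⟨⟨(r : ℕ) - 1, by omega⟩, ?_⟩
      have hb := H3 ((r : ℕ) - 1) (by omega) (by omega)
      have heq : (⟨(r : ℕ) - 1 + 1, by omega⟩ : Fin n) = r := by
        apply Fin.ext
        dsimp only
        omega
      rw [heq] at hb
      exact hb
  -- the four obstruction vectors
  set V : Fin 4 → (Fin k → ℂ) := fun i =>
    if (i : ℕ) = 0 then θ (Pi.single i0 1) (Pi.single i1 1)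
    else if (i : ℕ) = 1 then θ (Pi.single i1 1) (Pi.single i1 1)
    else if (i : ℕ) = 2 then θ (Pi.single itop 1) (Pi.single i0 1)
    else θ (Pi.single i1 1) (Pi.single i0 1)
      - c • θ (Pi.single i0 1) (Pi.single i0 1) with hV
  -- find a nonzero covector annihilating them
  set M : (Fin k → ℂ) →ₗ[ℂ] (Fin 4 → ℂ) :=
    LinearMap.pi (fun i => ∑ j : Fin k, (V i j) • LinearMap.proj j) with hM
  have hMnotinj : ¬ Function.Injective M := by
    intro h
    have hle := LinearMap.finrank_le_finrank_of_injective h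
    rw [Module.finrank_pi, Module.finrank_pi] at hle
    simp at hle
    omega
  have : ∃ co : Fin k → ℂ, co ≠ 0 ∧ M co = 0 := by
    rw [← LinearMap.ker_eq_bot] at hMnotinj
    rcases Submodule.ne_bot_iff _ |>.1 hMnotinj with ⟨co, hmem, hne⟩
    exact ⟨co, hne, hmem⟩
  obtain ⟨co, hco, hMco⟩ := this
  set lam : (Fin k → ℂ) →ₗ[ℂ] ℂ :=
    ∑ j : Fin k, co j • (LinearMap.proj j : (Fin k → ℂ) →ₗ[ℂ] ℂ) with hlam
  have hlamapply : ∀ v : Fin k → ℂ, lam v = ∑ j : Fin k, co j * v j := by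
    intro v
    rw [hlam]
    simp [LinearMap.sum_apply]
  have hkill : ∀ i : Fin 4, lam (V i) = 0 := by
    intro i
    have := congrFun hMco i
    rw [hM] at this
    simp only [LinearMap.pi_apply, LinearMap.sum_apply, LinearMap.smul_apply,
      LinearMap.proj_apply, Pi.zero_apply, smul_eq_mul] at this
    rw [hlamapply]
    rw [← this]
    exact Finset.sum_congr rfl (fun j _ => mul_comm _ _)
  have k0 : lam (θ (Pi.single i0 1) (Pi.single i1 1)) = 0 := by
    have h := hkill ⟨0, by omega⟩; rw [hV] at h; simpa using h
  have k1 : lam (θ (Pi.single i1 1) (Pi.single i1 1)) = 0 := by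
    have h := hkill ⟨1, by omega⟩; rw [hV] at h; simpa using h
  have k2 : lam (θ (Pi.single itop 1) (Pi.single i0 1)) = 0 := by
    have h := hkill ⟨2, by omega⟩; rw [hV] at h; simpa using h
  have k3 : lam (θ (Pi.single i1 1) (Pi.single i0 1))
      = c * lam (θ (Pi.single i0 1) (Pi.single i0 1)) := by
    have h := hkill ⟨3, by omega⟩; rw [hV] at h
    simp only [map_sub, map_smul, smul_eq_mul] at h
    norm_num at h
    linear_combination h
  -- the coboundary functional g
  set coeff : Fin n → ℂ := fun j =>
    if (j : ℕ) = 2 then lam (θ (Pi.single i0 1) (Pi.single i0 1))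
    else if 3 ≤ (j : ℕ) then
      lam (θ (Pi.single (⟨(j : ℕ) - 1, by have := j.isLt; omega⟩ : Fin n) 1)
        (Pi.single i0 1))
    else 0 with hcoeff
  set g : (Fin n → ℂ) →ₗ[ℂ] ℂ :=
    ∑ j : Fin n, coeff j • (LinearMap.proj j : (Fin n → ℂ) →ₗ[ℂ] ℂ) with hg
  have gE : ∀ i : Fin n, g (Pi.single i 1) = coeff i := by
    intro i
    rw [hg]
    simp [LinearMap.sum_apply, Pi.single_apply]
  have gE2 : g (Pi.single i2 1) = lam (θ (Pi.single i0 1) (Pi.single i0 1)) := by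
    rw [gE, hcoeff, hi2]
    norm_num
  have gE3 : ∀ a : ℕ, 3 ≤ a → ∀ ha : a < n,
      g (Pi.single (⟨a, ha⟩ : Fin n) 1)
        = lam (θ (Pi.single (⟨a - 1, by omega⟩ : Fin n) 1) (Pi.single i0 1)) := by
    intro a ha3 ha
    rw [gE, hcoeff]
    dsimp only
    rw [if_neg (by omega), if_pos (by omega)]
  -- the key identity: lam ∘ θ is the coboundary of g
  have key : ∀ x y, lam (θ x y) = g (B x y) := by
    have hkey : θ.compr₂ lam = B.compr₂ g := by
      apply LinearMap.ext_basis (Pi.basisFun ℂ (Fin n)) (Pi.basisFun ℂ (Fin n))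
      intro a b
      simp only [Pi.basisFun_apply, LinearMap.compr₂_apply]
      by_cases hb0 : (b : ℕ) = 0
      · have hbeq : b = i0 := Fin.ext hb0
        rw [hbeq]
        by_cases ha0 : (a : ℕ) = 0
        · have haeq : a = i0 := Fin.ext ha0
          rw [haeq, H2, gE2]
        · by_cases ha1 : (a : ℕ) = 1
          · have haeq : a = i1 := Fin.ext ha1
            rw [haeq, H5, map_smul, gE2, smul_eq_mul, k3]
          · by_cases hatop : (a : ℕ) = n - 1
            · have haeq : a = itop := Fin.ext hatop
              rw [haeq, H4, map_zero, k2]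
            · have han := a.isLt
              have hrep := H3 (a : ℕ) (by omega) (by omega)
              have haeta : (⟨(a : ℕ), by omega⟩ : Fin n) = a := Fin.ext rfl
              rw [haeta] at hrep
              rw [hrep, gE3 ((a : ℕ) + 1) (by omega) (by omega)]
              have heq2 : (⟨(a : ℕ) + 1 - 1, by omega⟩ : Fin n) = a := by
                apply Fin.ext
                dsimp only
                omega
              rw [heq2]
      · rw [H1 a b hb0, map_zero]
        by_cases ha2 : 2 ≤ (a : ℕ)
        · obtain ⟨s, hs⟩ := rep a ha2
          rw [← hs, Flem s b hb0, map_zero]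
        · by_cases hb1 : (b : ℕ) = 1
          · have hbeq : b = i1 := Fin.ext hb1
            rw [hbeq]
            by_cases ha0 : (a : ℕ) = 0
            · have haeq : a = i0 := Fin.ext ha0
              rw [haeq, k0]
            · have haeq : a = i1 := Fin.ext (by omega)
              rw [haeq, k1]
          · by_cases hb2 : (b : ℕ) = 2
            · have hbeq : b = i2 := Fin.ext hb2
              rw [hbeq, Elem0, map_zero]
            · have hbn := b.isLt
              have hrep := H3 ((b : ℕ) - 1) (by omega) (by omega)
              have heq2 : (⟨(b : ℕ) - 1 + 1, by omega⟩ : Fin n) = b := by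
                apply Fin.ext
                dsimp only
                omega
              rw [heq2] at hrep
              rw [← hrep, ElemB a ⟨(b : ℕ) - 1, by omega⟩ (by dsimp only; omega),
                map_zero]
    intro x y
    have h := LinearMap.congr_fun (LinearMap.congr_fun hkey x) y
    simpa [LinearMap.compr₂_apply] using h
  -- build the functional q and the element u
  obtain ⟨j0, hj0⟩ : ∃ j0, co j0 ≠ 0 := by
    by_contra h
    push_neg at h
    exact hco (funext fun j => h j)
  set w : Fin k → ℂ := (co j0)⁻¹ • (Pi.single j0 1 : Fin k → ℂ) with hw
  have hlamw : lam w = 1 := by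
    rw [hlamapply, hw]
    simp only [Pi.smul_apply, Pi.single_apply, smul_eq_mul, mul_ite, mul_one, mul_zero]
    rw [Finset.sum_ite_eq' Finset.univ j0 (fun j => co j * (co j0)⁻¹)]
    simp [Finset.mem_univ, mul_inv_cancel₀ hj0]
  set q : ((Fin n → ℂ) × (Fin k → ℂ)) →ₗ[ℂ] ℂ :=
    lam ∘ₗ (LinearMap.snd ℂ _ _) - g ∘ₗ (LinearMap.fst ℂ _ _) with hq
  have hq0 : ∀ a b, q (extMul n k μ (fun x y => θ x y) a b) = 0 := by
    intro a b
    rw [hq]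
    simp only [LinearMap.sub_apply, LinearMap.comp_apply, LinearMap.snd_apply,
      LinearMap.fst_apply]
    show lam (θ a.1 b.1) - g (μ a.1 b.1) = 0
    rw [key, hB, sub_self]
  have hqu : q ((0 : Fin n → ℂ), w) = 1 := by
    rw [hq]
    simp only [LinearMap.sub_apply, LinearMap.comp_apply, LinearMap.snd_apply,
      LinearMap.fst_apply]
    show lam w - g 0 = 1
    rw [hlamw, map_zero, sub_zero]
  exact split_of_functional n k (by omega) μ _ q ((0 : Fin n → ℂ), w) rfl hqu hq0

lemma single_val {n : ℕ} (a i : Fin n) :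
    (Pi.single a 1 : Fin n → ℂ) i = if (i : ℕ) = (a : ℕ) then 1 else 0 := by
  rw [Pi.single_apply]
  simp [Fin.ext_iff]

noncomputable def F1bil (n : ℕ) : (Fin n → ℂ) →ₗ[ℂ] (Fin n → ℂ) →ₗ[ℂ] (Fin n → ℂ) :=
  LinearMap.mk₂ ℂ (F1mul n)
    (by intro x x' y; funext j; simp only [F1mul, Pi.add_apply]; split_ifs <;> ring)
    (by intro c x y; funext j
        simp only [F1mul, Pi.smul_apply, smul_eq_mul]; split_ifs <;> ring)
    (by intro x y y'; funext j; simp only [F1mul, Pi.add_apply]; split_ifs <;> ring)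
    (by intro c x y; funext j
        simp only [F1mul, Pi.smul_apply, smul_eq_mul]; split_ifs <;> ring)

noncomputable def F2bil (n : ℕ) : (Fin n → ℂ) →ₗ[ℂ] (Fin n → ℂ) →ₗ[ℂ] (Fin n → ℂ) :=
  LinearMap.mk₂ ℂ (F2mul n)
    (by intro x x' y; funext j; simp only [F2mul, Pi.add_apply]; split_ifs <;> ring)
    (by intro c x y; funext j
        simp only [F2mul, Pi.smul_apply, smul_eq_mul]; split_ifs <;> ring)
    (by intro x y y'; funext j; simp only [F2mul, Pi.add_apply]; split_ifs <;> ring)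
    (by intro c x y; funext j
        simp only [F2mul, Pi.smul_apply, smul_eq_mul]; split_ifs <;> ring)

lemma F1H1 (n : ℕ) (hn : 4 ≤ n) : ∀ a b : Fin n, (b : ℕ) ≠ 0 →
    F1mul n (Pi.single a 1) (Pi.single b 1) = 0 := by
  intro a b hb
  funext j
  have hj := j.isLt
  simp only [F1mul, single_val, Pi.zero_apply]
  split_ifs <;> first | rfl | (exfalso; first | omega | exact ‹False›) | norm_num

lemma F1H2 (n : ℕ) (hn : 4 ≤ n) :
    F1mul n (Pi.single ⟨0, by omega⟩ 1) (Pi.single ⟨0, by omega⟩ 1)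
      = Pi.single (⟨2, by omega⟩ : Fin n) 1 := by
  funext j
  have hj := j.isLt
  simp only [F1mul, single_val, Pi.zero_apply]
  split_ifs <;> first | rfl | (exfalso; first | omega | exact ‹False›) | norm_num

lemma F1H3 (n : ℕ) (hn : 4 ≤ n) : ∀ a : ℕ, ∀ _ha : 2 ≤ a, ∀ _hb : a ≤ n - 2,
    F1mul n (Pi.single (⟨a, by omega⟩ : Fin n) 1) (Pi.single ⟨0, by omega⟩ 1)
      = Pi.single (⟨a + 1, by omega⟩ : Fin n) 1 := by
  intro a ha hb
  funext j
  have hj := j.isLt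
  simp only [F1mul, single_val, Pi.zero_apply]
  split_ifs <;> first | rfl | (exfalso; first | omega | exact ‹False›) | norm_num

lemma F1H4 (n : ℕ) (hn : 4 ≤ n) :
    F1mul n (Pi.single (⟨n - 1, by omega⟩ : Fin n) 1) (Pi.single ⟨0, by omega⟩ 1)
      = 0 := by
  funext j
  have hj := j.isLt
  simp only [F1mul, single_val, Pi.zero_apply]
  split_ifs <;> first | rfl | (exfalso; first | omega | exact ‹False›) | norm_num

lemma F1H5 (n : ℕ) (hn : 4 ≤ n) :
    F1mul n (Pi.single (⟨1, by omega⟩ : Fin n) 1) (Pi.single ⟨0, by omega⟩ 1)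
      = (1 : ℂ) • (Pi.single (⟨2, by omega⟩ : Fin n) 1 : Fin n → ℂ) := by
  funext j
  have hj := j.isLt
  simp only [F1mul, single_val, Pi.zero_apply, one_smul]
  split_ifs <;> first | rfl | (exfalso; first | omega | exact ‹False›) | norm_num

lemma F2H1 (n : ℕ) (hn : 4 ≤ n) : ∀ a b : Fin n, (b : ℕ) ≠ 0 →
    F2mul n (Pi.single a 1) (Pi.single b 1) = 0 := by
  intro a b hb
  funext j
  have hj := j.isLt
  simp only [F2mul, single_val, Pi.zero_apply]
  split_ifs <;> first | rfl | (exfalso; first | omega | exact ‹False›) | norm_num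

lemma F2H2 (n : ℕ) (hn : 4 ≤ n) :
    F2mul n (Pi.single ⟨0, by omega⟩ 1) (Pi.single ⟨0, by omega⟩ 1)
      = Pi.single (⟨2, by omega⟩ : Fin n) 1 := by
  funext j
  have hj := j.isLt
  simp only [F2mul, single_val, Pi.zero_apply]
  split_ifs <;> first | rfl | (exfalso; first | omega | exact ‹False›) | norm_num

lemma F2H3 (n : ℕ) (hn : 4 ≤ n) : ∀ a : ℕ, ∀ _ha : 2 ≤ a, ∀ _hb : a ≤ n - 2,
    F2mul n (Pi.single (⟨a, by omega⟩ : Fin n) 1) (Pi.single ⟨0, by omega⟩ 1)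
      = Pi.single (⟨a + 1, by omega⟩ : Fin n) 1 := by
  intro a ha hb
  funext j
  have hj := j.isLt
  simp only [F2mul, single_val, Pi.zero_apply]
  split_ifs <;> first | rfl | (exfalso; first | omega | exact ‹False›) | norm_num

lemma F2H4 (n : ℕ) (hn : 4 ≤ n) :
    F2mul n (Pi.single (⟨n - 1, by omega⟩ : Fin n) 1) (Pi.single ⟨0, by omega⟩ 1)
      = 0 := by
  funext j
  have hj := j.isLt
  simp only [F2mul, single_val, Pi.zero_apply]
  split_ifs <;> first | rfl | (exfalso; first | omega | exact ‹False›) | norm_num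

lemma F2H5 (n : ℕ) (hn : 4 ≤ n) :
    F2mul n (Pi.single (⟨1, by omega⟩ : Fin n) 1) (Pi.single ⟨0, by omega⟩ 1)
      = (0 : ℂ) • (Pi.single (⟨2, by omega⟩ : Fin n) 1 : Fin n → ℂ) := by
  funext j
  have hj := j.isLt
  simp only [F2mul, single_val, Pi.zero_apply, zero_smul]
  split_ifs <;> first | rfl | (exfalso; first | omega | exact ‹False›) | norm_num

/-- Any central extension of `F_n^1` (resp. `F_n^2`) by an abelian `V` of
dimension `k ≥ 5`, with `V` the center of the extension, is split. -/
theorem high_dim_central_extensions_split (n k : ℕ) (hn : 4 ≤ n) (hk : 5 ≤ k) :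
    (∀ θ : (Fin n → ℂ) →ₗ[ℂ] (Fin n → ℂ) →ₗ[ℂ] (Fin k → ℂ),
      (∀ x y z : Fin n → ℂ,
          θ x (F1mul n y z) = θ (F1mul n x y) z - θ (F1mul n x z) y) →
      (∀ z : (Fin n → ℂ) × (Fin k → ℂ),
        (∀ w, extMul n k (F1mul n) (fun x y => θ x y) z w = 0 ∧
              extMul n k (F1mul n) (fun x y => θ x y) w z = 0) ↔ z.1 = 0) →
      IsSplit n k (extMul n k (F1mul n) (fun x y => θ x y))) ∧
    (∀ θ : (Fin n → ℂ) →ₗ[ℂ] (Fin n → ℂ) →ₗ[ℂ] (Fin k → ℂ),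
      (∀ x y z : Fin n → ℂ,
          θ x (F2mul n y z) = θ (F2mul n x y) z - θ (F2mul n x z) y) →
      (∀ z : (Fin n → ℂ) × (Fin k → ℂ),
        (∀ w, extMul n k (F2mul n) (fun x y => θ x y) z w = 0 ∧
              extMul n k (F2mul n) (fun x y => θ x y) w z = 0) ↔ z.1 = 0) →
      IsSplit n k (extMul n k (F2mul n) (fun x y => θ x y))) := by
  constructor
  · intro θ hcoc _hcen
    exact master_split n k hn hk (F1mul n) (F1bil n) (fun _ _ => rfl) θ hcoc 1
      (F1H1 n hn) (F1H2 n hn) (F1H3 n hn) (F1H4 n hn) (F1H5 n hn)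
  · intro θ hcoc _hcen
    exact master_split n k hn hk (F2mul n) (F2bil n) (fun _ _ => rfl) θ hcoc 0
      (F2H1 n hn) (F2H2 n hn) (F2H3 n hn) (F2H4 n hn) (F2H5 n hn)
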